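/- The matching relation on a vertex's double-vertex dominators is totally ordered: for any vertex v appearing in some double-vertex dominator of u, and any two vertices w, w' such that {v, w} ∈ D_u and {v, w'} ∈ D_u with w ≠ w', either {v, w} dominates {v, w'} or {v, w'} dominates {v, w}. -/

import Mathlib

/-- A nonempty directed path `p` from `a` to `b` in the graph with edge relation `E`. -/
def IsPath {V : Type*} (E : V → V → Prop) (p : List V) (a b : V) : Prop :=
  p ≠ [] ∧ p.head? = some a ∧ p.getLast? = some b ∧ p.Chain' E

/-- `A` dominates `B` with respect to `root`: every path from a vertex of `B` to `root`
contains a vertex of `A`. -/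
def Dominates {V : Type*} (E : V → V → Prop) (root : V) (A B : Set V) : Prop :=
  ∀ b ∈ B, ∀ p : List V, IsPath E p b root → ∃ a ∈ A, a ∈ p

/-- `A` is a dominator of `B`: it dominates `B` and no proper subset `A \ {v}` does. -/
def IsDominator {V : Type*} (E : V → V → Prop) (root : V) (A B : Set V) : Prop :=
  Dominates E root A B ∧ ∀ v ∈ A, ¬ Dominates E root (A \ {v}) B

/-- `{v, w}` is a double-vertex dominator of `u`. -/
def DoubleDom {V : Type*} (E : V → V → Prop) (root : V) (u v w : V) : Prop :=
  v ≠ w ∧ Dominates E root {v, w} {u} ∧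
    ¬ Dominates E root {v} {u} ∧ ¬ Dominates E root {w} {u}

/-- The edge relation `E` is acyclic. -/
def Acyclic {V : Type*} (E : V → V → Prop) : Prop :=
  ∀ a b, E a b → ¬ Relation.ReflTransGen E b a

/-!
Take a path `R` from `u` to `root` avoiding `v`; it passes through both `w` and `w'`. Say `w` comes
first. Following `R` up to `w` and then any path from `w` to `root` gives a path from `u` whose part
before `w` avoids `v` and `w'`, so `{v, w'}` must be met on the path from `w`: `{v, w'}` dominates `w`.
-/

theorem List.exists_eq_append_cons_of_exists {α : Type*} {P : α → Prop} {l : List α}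
    (h : ∃ x ∈ l, P x) : ∃ s x t, l = s ++ x :: t ∧ P x ∧ ∀ y ∈ s, ¬ P y := by
  classical
  obtain ⟨x, hx⟩ := Option.isSome_iff_exists.mp
    (List.find?_isSome (p := fun x => decide (P x)) (xs := l) |>.mpr (by simpa using h))
  obtain ⟨hPx, s, t, rfl, hs⟩ := List.find?_eq_some_iff_append.mp hx
  exact ⟨s, x, t, rfl, by simpa using hPx, fun y hy => by simpa using hs y hy⟩

section Paths

variable {V : Type*} {E : V → V → Prop}

theorem IsPath.head_mem {p : List V} {a b : V} (hp : IsPath E p a b) : a ∈ p :=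
  List.mem_of_mem_head? hp.2.1

theorem IsPath.append {p q : List V} {a b c : V} (hp : IsPath E p a b) (hq : IsPath E q b c) :
    IsPath E (p ++ q.tail) a c := by
  obtain ⟨hp0, hpa, hpb, hpc⟩ := hp
  obtain _ | ⟨b', q⟩ := q
  · exact absurd rfl hq.1
  obtain ⟨-, hqb, hqc, hqE⟩ := hq
  obtain rfl : b = b' := by simpa using hqb.symm
  refine ⟨by simp [hp0], by simp [List.head?_append, hpa], ?_, ?_⟩
  · cases q <;> simp_all [List.getLast?_append]
  · refine List.IsChain.append hpc hqE.tail fun x hx y hy => ?_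
    obtain rfl : x = b := by simpa [hpb] using hx.symm
    exact hqE.rel_head? hy

theorem IsPath.prefix {s t : List V} {a b x : V} (hp : IsPath E (s ++ x :: t) a b) :
    IsPath E (s ++ [x]) a x := by
  obtain ⟨_, hpa, _, hpE⟩ := hp
  refine ⟨by simp, ?_, by simp, hpE.prefix ⟨t, by simp⟩⟩
  cases s <;> simpa using hpa

end Paths

section Dominators

variable {V : Type*} {E : V → V → Prop} {root : V}

theorem exists_path_not_mem_of_not_dominates {u v : V} (h : ¬ Dominates E root {v} {u}) :
    ∃ p, IsPath E p u root ∧ v ∉ p := by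
  simpa [Dominates] using h

theorem Dominates.mem_of_not_mem {u v w : V} {p : List V} (h : Dominates E root {v, w} {u})
    (hp : IsPath E p u root) (hv : v ∉ p) : w ∈ p := by
  obtain ⟨a, ha, hap⟩ := h u rfl p hp
  rcases ha with rfl | rfl
  exacts [absurd hap hv, hap]

theorem Dominates.insert_of_mem {A B : Set V} {a : V} (h : Dominates E root A B) (ha : a ∈ A) :
    Dominates E root A (insert a B) := by
  rintro b (rfl | hb) p hp
  exacts [⟨b, ha, hp.head_mem⟩, h b hb p hp]

theorem Dominates.of_path {A : Set V} {u x : V} {p : List V} (h : Dominates E root A {u})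
    (hp : IsPath E p u x) (hpA : ∀ a ∈ A, a ∈ p → a = x) : Dominates E root A {x} := by
  rintro _ rfl q hq
  obtain ⟨a, ha, hapq⟩ := h u rfl _ (hp.append hq)
  refine ⟨a, ha, ?_⟩
  rcases List.mem_append.mp hapq with hap | haq
  · exact hpA a ha hap ▸ hq.head_mem
  · exact List.mem_of_mem_tail haq

theorem Dominates.pair_of_first_on_path {u v x y : V} {s t : List V}
    (h : Dominates E root {v, y} {u}) (hp : IsPath E (s ++ x :: t) u root)
    (hv : v ∉ s ++ x :: t) (hy : y ∉ s) : Dominates E root {v, y} {v, x} := by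
  refine (h.of_path hp.prefix ?_).insert_of_mem (by simp)
  rintro a (rfl | rfl) ha
  · exact absurd (List.IsPrefix.subset ⟨t, by simp⟩ ha) hv
  · simpa [hy] using ha

end Dominators

theorem matching_total_order_general {V : Type*} (E : V → V → Prop) (root : V)
    (u v w w' : V)
    (h : DoubleDom E root u v w) (h' : DoubleDom E root u v w') :
    Dominates E root {v, w} {v, w'} ∨ Dominates E root {v, w'} {v, w} := by
  obtain ⟨R, hR, hvR⟩ := exists_path_not_mem_of_not_dominates h.2.2.1
  obtain ⟨s, x, t, rfl, hx, hs⟩ := List.exists_eq_append_cons_of_exists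
    (P := (· ∈ ({w, w'} : Set V))) ⟨w, h.2.1.mem_of_not_mem hR hvR, by simp⟩
  rcases hx with rfl | rfl
  · exact .inr (h'.2.1.pair_of_first_on_path hR hvR fun hw' => hs _ hw' (by simp))
  · exact .inl (h.2.1.pair_of_first_on_path hR hvR fun hw => hs _ hw (by simp))

theorem matching_total_order {V : Type*} [Fintype V] (E : V → V → Prop) (root : V)
    (hacyc : Acyclic E) (u v w w' : V)
    (h : DoubleDom E root u v w) (h' : DoubleDom E root u v w') (hne : w ≠ w') :
    Dominates E root {v, w} {v, w'} ∨ Dominates E root {v, w'} {v, w} :=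
  matching_total_order_general E root u v w w' h h'
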